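/- Let β > 0, 0 < c < 1, γ > 0, and x real. For |t| < 1, the generating function with modified coefficients Σ_{n=0}^∞ [γ/(n+γ)] M_n(x; β, c) (ct)^n/n! = Σ_{m=0}^∞ Σ_{j=0}^∞ [(γ)_{m+j} (x+β)_m (−x)_j / ((γ+1)_{m+j} m! j!)] (ct)^m t^j holds (both sides converging absolutely for |t| < min(1, 1/c)), where M_n(x;β,c) = (β)_n Σ_{k=0}^n [(−n)_k (−x)_k/((β)_k k!)](1−1/c)^k, and the right-hand side is the Appell F₁ function F₁[γ; x+β, −x; γ+1; ct, t]. -/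

import Mathlib

/-- Pochhammer symbol (rising factorial) of a real number. -/
noncomputable def poch (a : ℝ) (k : ℕ) : ℝ := ∏ i ∈ Finset.range k, (a + i)

/-- Meixner polynomials \(M_n(x;\beta,c)\). -/
noncomputable def meixner (β c x : ℝ) (n : ℕ) : ℝ :=
  poch β n * ∑ k ∈ Finset.range (n + 1),
    poch (-(n : ℝ)) k * poch (-x) k / (poch β k * (Nat.factorial k)) * (1 - 1 / c) ^ k

/-!
The Appell coefficient factors as `γ / (m + j + γ)` times `(x+β)_m (ct)^m / m!` times
`(-x)_j t^j / j!`. The first factor lies in `(0, 1]` and the other two are coefficients of the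
binomial series of `(1 - ct)^{-x-β}` and `(1 - t)^{x}`, which converge absolutely on the unit
disc; this gives absolute convergence of the double series. Its antidiagonal sums are the terms of
the left-hand side because `M_n(x; β, c) = Σ_j C(n, j) (-x)_j (x+β)_{n-j} c^{-j}`, a terminating
Pfaff transformation of the defining `₂F₁` that follows from the Chu–Vandermonde identity
`(a + b)_n = Σ_k C(n, k) (a)_k (b)_{n-k}`.
-/

open Finset

lemma poch_succ (a : ℝ) (k : ℕ) : poch a (k + 1) = poch a k * (a + k) :=
  prod_range_succ _ _

lemma poch_add (a : ℝ) (m n : ℕ) : poch a (m + n) = poch a m * poch (a + m) n := by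
  rw [poch, prod_range_add, poch, poch]
  push_cast
  simp only [add_assoc]

lemma poch_pos {a : ℝ} (ha : 0 < a) (k : ℕ) : 0 < poch a k :=
  prod_pos fun _ _ => by positivity

lemma poch_mul_add_natCast (a : ℝ) (n : ℕ) : poch a n * (a + n) = a * poch (a + 1) n := by
  rw [← poch_succ, add_comm n, poch_add]
  simp [poch]

lemma poch_div_poch_add_one {γ : ℝ} (hγ : 0 < γ) (n : ℕ) :
    poch γ n / poch (γ + 1) n = γ / (n + γ) := by
  rw [div_eq_div_iff (poch_pos (by linarith) n).ne' (by positivity), add_comm (n : ℝ),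
    poch_mul_add_natCast, mul_comm]

lemma poch_eq_eval_ascPochhammer (a : ℝ) (k : ℕ) :
    poch a k = (ascPochhammer ℝ k).eval a := by
  induction k with
  | zero => simp [poch]
  | succ k ih => rw [poch_succ, ih, ascPochhammer_succ_eval]

lemma poch_neg_natCast (n k : ℕ) : poch (-n) k = (-1) ^ k * n.descFactorial k := by
  rw [poch_eq_eval_ascPochhammer, ascPochhammer_eval_neg_eq_descPochhammer,
    descPochhammer_eval_eq_descFactorial]

lemma poch_add_eq_sum_antidiagonal (a b : ℝ) (n : ℕ) :
    poch (a + b) n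
      = ∑ p ∈ antidiagonal n, (n.choose p.1 : ℝ) * (poch a p.1 * poch b p.2) := by
  induction n with
  | zero => simp [poch]
  | succ n ih =>
    rw [sum_antidiagonal_choose_succ_mul (fun i j => poch a i * poch b j), ← sum_add_distrib,
      poch_succ, ih, sum_mul]
    refine sum_congr rfl fun p hp => ?_
    rw [HasAntidiagonal.mem_antidiagonal] at hp
    have hn : (n : ℝ) = p.1 + p.2 := by exact_mod_cast hp.symm
    rw [Nat.choose_symm_of_eq_add hp.symm, poch_succ, poch_succ, hn]
    ring

lemma sum_choose_mul_choose_mul_poch (a b : ℝ) (n k : ℕ) :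
    ∑ i ∈ range (n - k + 1), (n.choose (k + i) : ℝ) * (k + i).choose k * poch a (k + i)
        * poch (b - a) (n - (k + i))
      = n.choose k * poch a k * poch (b + k) (n - k) := by
  have hterm : ∀ i ∈ range (n - k + 1),
      (n.choose (k + i) : ℝ) * (k + i).choose k * poch a (k + i) * poch (b - a) (n - (k + i))
        = n.choose k * poch a k
          * ((n - k).choose i * (poch (a + k) i * poch (b - a) (n - k - i))) := by
    intro i _
    have hchoose : (n.choose (k + i) : ℝ) * (k + i).choose k = n.choose k * (n - k).choose i := by
      have h := Nat.choose_mul (n := n) (Nat.le_add_right k i)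
      rw [Nat.add_sub_cancel_left] at h
      exact_mod_cast h
    rw [poch_add, Nat.sub_add_eq]
    linear_combination (poch a k * poch (a + k) i * poch (b - a) (n - k - i)) * hchoose
  rw [sum_congr rfl hterm, ← mul_sum, ← Nat.sum_antidiagonal_eq_sum_range_succ
      (fun i j => ((n - k).choose i : ℝ) * (poch (a + k) i * poch (b - a) j)),
    ← poch_add_eq_sum_antidiagonal, show a + k + (b - a) = b + k by ring]

lemma sum_choose_mul_poch_mul_one_add_pow (a b w : ℝ) (n : ℕ) :
    ∑ j ∈ range (n + 1), (n.choose j : ℝ) * poch a j * poch (b - a) (n - j) * (1 + w) ^ j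
      = ∑ k ∈ range (n + 1), (n.choose k : ℝ) * poch a k * poch (b + k) (n - k) * w ^ k := by
  calc _ = ∑ j ∈ range (n + 1), ∑ k ∈ range (j + 1),
        (n.choose j : ℝ) * j.choose k * poch a j * poch (b - a) (n - j) * w ^ k := by
        refine sum_congr rfl fun j _ => ?_
        rw [add_comm, add_pow, mul_sum]
        exact sum_congr rfl fun k _ => by ring
    _ = ∑ k ∈ range (n + 1), ∑ i ∈ range (n - k + 1),
        (n.choose (k + i) : ℝ) * (k + i).choose k * poch a (k + i) * poch (b - a) (n - (k + i))
          * w ^ k := by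
        simp only [range_eq_Ico]
        rw [← sum_Ico_Ico_comm]
        refine sum_congr rfl fun k hk => ?_
        rw [sum_Ico_eq_sum_range, ← range_eq_Ico,
          Nat.sub_add_comm (Nat.lt_succ_iff.mp (mem_Ico.mp hk).2)]
    _ = _ := by
        simp only [← sum_mul, sum_choose_mul_choose_mul_poch]

lemma meixner_eq_sum {β : ℝ} (hβ : 0 < β) (c x : ℝ) (n : ℕ) :
    meixner β c x n
      = ∑ j ∈ range (n + 1),
          (n.choose j : ℝ) * poch (-x) j * poch (x + β) (n - j) * (1 / c) ^ j := by
  have h := sum_choose_mul_poch_mul_one_add_pow (-x) β (1 / c - 1) n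
  rw [sub_neg_eq_add, add_comm β, add_sub_cancel] at h
  rw [h, meixner, mul_sum]
  refine sum_congr rfl fun k hk => ?_
  have hkn : k ≤ n := Nat.lt_succ_iff.mp (mem_range.mp hk)
  have hβk := (poch_pos hβ k).ne'
  rw [poch_neg_natCast, Nat.descFactorial_eq_factorial_mul_choose, ← Nat.add_sub_cancel' hkn,
    poch_add, Nat.add_sub_cancel_left, Nat.add_sub_cancel' hkn,
    show (1 : ℝ) / c - 1 = -1 * (1 - 1 / c) by ring, mul_pow]
  push_cast
  field_simp

lemma sum_antidiagonal_eq_meixner {β : ℝ} (hβ : 0 < β) {c : ℝ} (hc : c ≠ 0)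
    (x t : ℝ) (n : ℕ) :
    ∑ p ∈ antidiagonal n, poch (x + β) p.1 * (c * t) ^ p.1 / p.1.factorial
        * (poch (-x) p.2 * t ^ p.2 / p.2.factorial)
      = meixner β c x n * (c * t) ^ n / n.factorial := by
  rw [← Nat.sum_antidiagonal_swap]
  simp only [Prod.fst_swap, Prod.snd_swap]
  rw [Nat.sum_antidiagonal_eq_sum_range_succ
      (fun j m => poch (x + β) m * (c * t) ^ m / m.factorial
        * (poch (-x) j * t ^ j / j.factorial)),
    meixner_eq_sum hβ, sum_mul, sum_div]
  refine sum_congr rfl fun j hj => ?_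
  have hjn : j ≤ n := Nat.lt_succ_iff.mp (mem_range.mp hj)
  have hpow : (c * t) ^ n * (1 / c) ^ j = (c * t) ^ (n - j) * t ^ j := by
    rw [← Nat.sub_add_cancel hjn, pow_add, Nat.add_sub_cancel, mul_assoc, ← mul_pow,
      mul_right_comm, mul_one_div_cancel hc, one_mul]
  rw [Nat.cast_choose ℝ hjn]
  field_simp
  linear_combination poch (x + β) (n - j) * poch (-x) j * hpow.symm

lemma norm_binomialSeries_neg (a : ℝ) (n : ℕ) :
    ‖binomialSeries ℝ (-a) n‖ = |poch a n| / n.factorial := by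
  rw [binomialSeries, FormalMultilinearSeries.ofScalars_norm, Ring.choose_neg', Real.norm_eq_abs]
  have h := Ring.factorial_nsmul_multichoose_eq_ascPochhammer a n
  rw [Polynomial.ascPochhammer_smeval_eq_eval, ← poch_eq_eval_ascPochhammer, nsmul_eq_mul] at h
  rw [← h, abs_mul, Nat.abs_cast, mul_div_cancel_left₀ _ (by positivity), Units.smul_def,
    zsmul_eq_mul, abs_mul, ← Int.cast_abs, Int.abs_negOnePow, Int.cast_one, one_mul]

lemma summable_norm_poch_mul_pow_div_factorial (a : ℝ) {r : ℝ} (hr : |r| < 1) :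
    Summable fun n => ‖poch a n * r ^ n / n.factorial‖ := by
  have h := (binomialSeries ℝ (-a)).summable_norm_mul_pow (r := ‖r‖₊)
    (lt_of_lt_of_le (by simpa [← NNReal.coe_lt_one] using hr) binomialSeries_radius_ge_one)
  simpa only [norm_binomialSeries_neg, coe_nnnorm, Real.norm_eq_abs, abs_div, abs_mul, abs_pow,
    Nat.abs_cast, div_mul_eq_mul_div] using h

theorem HasSum.sum_antidiagonal {A α : Type*} [AddCommMonoid A] [HasAntidiagonal A]
    [AddCommMonoid α] [TopologicalSpace α] [ContinuousAdd α] [RegularSpace α]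
    {f : A × A → α} {a : α} (hf : HasSum f a) :
    HasSum (fun n => ∑ p ∈ antidiagonal n, f p) a :=
  ((HasAntidiagonal.sigmaAntidiagonalEquivProd.hasSum_iff).mpr hf).sigma fun n => by
    rw [← sum_coe_sort]; exact hasSum_fintype _

lemma appell_term_eq {γ : ℝ} (hγ : 0 < γ) (a b u v : ℝ) (m j : ℕ) :
    poch γ (m + j) * poch a m * poch b j / (poch (γ + 1) (m + j) * m.factorial * j.factorial)
        * u ^ m * v ^ j
      = γ / ((m + j : ℕ) + γ)
        * (poch a m * u ^ m / m.factorial * (poch b j * v ^ j / j.factorial)) := by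
  rw [← poch_div_poch_add_one hγ]
  ring

lemma summable_abs_appell_term {γ : ℝ} (hγ : 0 < γ) {a b u v : ℝ} (hu : |u| < 1)
    (hv : |v| < 1) :
    Summable fun p : ℕ × ℕ =>
      |poch γ (p.1 + p.2) * poch a p.1 * poch b p.2 /
        (poch (γ + 1) (p.1 + p.2) * p.1.factorial * p.2.factorial) * u ^ p.1 * v ^ p.2| := by
  refine ((summable_norm_poch_mul_pow_div_factorial a hu).mul_norm
    (summable_norm_poch_mul_pow_div_factorial b hv)).of_nonneg_of_le (fun _ => abs_nonneg _)
    fun p => ?_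
  rw [appell_term_eq hγ, abs_mul, ← Real.norm_eq_abs (_ * _)]
  refine mul_le_of_le_one_left (norm_nonneg _) ?_
  rw [abs_of_pos (by positivity)]
  exact div_le_one_of_le₀ (le_add_of_nonneg_left (by positivity)) (by positivity)

lemma sum_antidiagonal_appell_term_eq_meixner {β : ℝ} (hβ : 0 < β) {c : ℝ} (hc : c ≠ 0)
    {γ : ℝ} (hγ : 0 < γ) (x t : ℝ) (n : ℕ) :
    ∑ p ∈ antidiagonal n, poch γ (p.1 + p.2) * poch (x + β) p.1 * poch (-x) p.2 /
        (poch (γ + 1) (p.1 + p.2) * p.1.factorial * p.2.factorial) * (c * t) ^ p.1 * t ^ p.2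
      = γ / (n + γ) * meixner β c x n * (c * t) ^ n / n.factorial := by
  rw [mul_assoc, mul_div_assoc, ← sum_antidiagonal_eq_meixner hβ hc x t n, mul_sum]
  refine sum_congr rfl fun p hp => ?_
  rw [appell_term_eq hγ, HasAntidiagonal.mem_antidiagonal.mp hp]

theorem meixner_modified_generating_function_general (β c γ x t : ℝ)
    (hβ : 0 < β) (hc0 : 0 < c) (hγ : 0 < γ) (ht : |t| < min 1 (1 / c)) :
    Summable (fun p : ℕ × ℕ =>
      |poch γ (p.1 + p.2) * poch (x + β) p.1 * poch (-x) p.2 /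
        (poch (γ + 1) (p.1 + p.2) * (Nat.factorial p.1) * (Nat.factorial p.2)) *
        (c * t) ^ p.1 * t ^ p.2|) ∧
    HasSum (fun n : ℕ => γ / ((n : ℝ) + γ) * meixner β c x n * (c * t) ^ n / (Nat.factorial n))
      (∑' p : ℕ × ℕ,
        poch γ (p.1 + p.2) * poch (x + β) p.1 * poch (-x) p.2 /
          (poch (γ + 1) (p.1 + p.2) * (Nat.factorial p.1) * (Nat.factorial p.2)) *
          (c * t) ^ p.1 * t ^ p.2) := by
  obtain ⟨ht1, htc⟩ := lt_min_iff.mp ht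
  have hct : |c * t| < 1 := by
    rwa [abs_mul, abs_of_pos hc0, ← lt_div_iff₀' hc0]
  have habs := summable_abs_appell_term (a := x + β) (b := -x) hγ hct ht1
  refine ⟨habs, ?_⟩
  have hsum := (summable_abs_iff.mp habs).hasSum.sum_antidiagonal
  simpa only [sum_antidiagonal_appell_term_eq_meixner hβ hc0.ne' hγ] using hsum

/-- Generating function with modified coefficients for the Meixner polynomials, equal
to the Appell function \(F_1[\gamma; x+\beta, -x; \gamma+1; ct, t]\); both sides
converge absolutely. -/
theorem meixner_modified_generating_function (β c γ x t : ℝ)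
    (hβ : 0 < β) (hc0 : 0 < c) (hc1 : c < 1) (hγ : 0 < γ) (ht : |t| < min 1 (1 / c)) :
    Summable (fun p : ℕ × ℕ =>
      |poch γ (p.1 + p.2) * poch (x + β) p.1 * poch (-x) p.2 /
        (poch (γ + 1) (p.1 + p.2) * (Nat.factorial p.1) * (Nat.factorial p.2)) *
        (c * t) ^ p.1 * t ^ p.2|) ∧
    HasSum (fun n : ℕ => γ / ((n : ℝ) + γ) * meixner β c x n * (c * t) ^ n / (Nat.factorial n))
      (∑' p : ℕ × ℕ,
        poch γ (p.1 + p.2) * poch (x + β) p.1 * poch (-x) p.2 /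
          (poch (γ + 1) (p.1 + p.2) * (Nat.factorial p.1) * (Nat.factorial p.2)) *
          (c * t) ^ p.1 * t ^ p.2) :=
  meixner_modified_generating_function_general β c γ x t hβ hc0 hγ ht
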